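/- arXiv:math/0011002 — 3 statements merged into one kernel-verified Lean document; each statement's English description precedes it below -/
import Mathlib

section
/- (Connection coefficient formula, equivalent to $q$-Saalschütz.) For $0<q<1$, nonzero complex numbers $a, b, \sigma$, and a nonnegative integer $m$: $(b\sigma; q)_m (b/\sigma; q)_m = (ab; q)_m (b/a; q)_m \sum_{k=0}^m \frac{(q^{-m};q)_k \, q^k}{(q;q)_k (ab;q)_k (q^{1-m}a/b;q)_k} (a\sigma;q)_k (a/\sigma;q)_k$, provided $(ab;q)_k \neq 0$ and $(q^{1-m}a/b;q)_k \neq 0$ for $0 \leq k \leq m$. -/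
/-!
Put `x = σ + σ⁻¹`, so that `(cσ;q)_k (c/σ;q)_k = ∏_{i<k} (1 - c q^i x + c² q^{2i})`. The identity
`1 - t c x + t² c² = (1 - t) (1 - t c²) + t (1 - c x + c²)`, with `c = a q^k` and `t c = b q^m`,
turns multiplication of an expansion of `(bσ;q)_m (b/σ;q)_m` in the basis `(aσ;q)_k (a/σ;q)_k` by
the next factor `1 - b q^m x + b² q^{2m}` into a two-term recurrence in `m` for the coefficients.
By the two `q`-Pascal rules it is solved by `[m k]_q (b/a)^k (b/a;q)_{m-k} (ab q^k;q)_{m-k}`, and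
the inversion `(x;q)_k = (-x)^k q^{k(k-1)/2} (q^{1-k}/x;q)_k` rewrites this as the `q`-Saalschütz
coefficient.
-/

/-- Finite q-shifted factorial `(c;q)_j`. -/
noncomputable def qP (q : ℝ) (c : ℂ) (j : ℕ) : ℂ :=
  ∏ i ∈ Finset.range j, (1 - c * (q : ℂ) ^ i)

section GaussBinom

variable {R : Type*} [CommRing R] (q : R)

def gaussBinom : ℕ → ℕ → R
  | _, 0 => 1
  | 0, _ + 1 => 0
  | n + 1, k + 1 => gaussBinom n k + q ^ (k + 1) * gaussBinom n (k + 1)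

@[simp]
lemma gaussBinom_zero_right (n : ℕ) : gaussBinom q n 0 = 1 := by
  cases n <;> rfl

@[simp]
lemma gaussBinom_zero_succ (k : ℕ) : gaussBinom q 0 (k + 1) = 0 := rfl

lemma gaussBinom_succ_succ (n k : ℕ) :
    gaussBinom q (n + 1) (k + 1) = gaussBinom q n k + q ^ (k + 1) * gaussBinom q n (k + 1) :=
  rfl

lemma gaussBinom_eq_zero_of_lt {n k : ℕ} (h : n < k) : gaussBinom q n k = 0 := by
  induction n generalizing k with
  | zero => obtain ⟨j, rfl⟩ := Nat.exists_eq_succ_of_ne_zero h.ne'; rfl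
  | succ n ih =>
    obtain ⟨j, rfl⟩ := Nat.exists_eq_succ_of_ne_zero (Nat.ne_zero_of_lt h)
    rw [gaussBinom_succ_succ, ih (by omega), ih (by omega), mul_zero, add_zero]

@[simp]
lemma gaussBinom_self (n : ℕ) : gaussBinom q n n = 1 := by
  induction n with
  | zero => rfl
  | succ n ih => rw [gaussBinom_succ_succ, ih, gaussBinom_eq_zero_of_lt q n.lt_succ_self]; ring

lemma gaussBinom_succ_succ' (n k : ℕ) :
    gaussBinom q (n + 1) (k + 1) = q ^ (n - k) * gaussBinom q n k + gaussBinom q n (k + 1) := by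
  induction n generalizing k with
  | zero => cases k <;> simp [gaussBinom_succ_succ]
  | succ n ih =>
    cases k with
    | zero =>
      have e0 := gaussBinom_succ_succ q (n + 1) 0
      have r := gaussBinom_succ_succ q n 0
      have i := ih 0
      simp only [gaussBinom_zero_right, Nat.sub_zero, zero_add] at e0 r i ⊢
      linear_combination e0 + q * i - r
    | succ j =>
      -- `gaussBinom q n (j + 1)` vanishes whenever the two exponents differ
      have hpow : q ^ (j + 2) * q ^ (n - (j + 1)) * gaussBinom q n (j + 1) =
          q ^ (n - j) * q ^ (j + 1) * gaussBinom q n (j + 1) := by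
        rcases le_or_gt (j + 1) n with h | h
        · rw [← pow_add, ← pow_add]; congr 2; omega
        · simp [gaussBinom_eq_zero_of_lt q h]
      rw [Nat.add_sub_add_right]
      linear_combination gaussBinom_succ_succ q (n + 1) (j + 1) + ih j + q ^ (j + 2) * ih (j + 1)
        - q ^ (n - j) * gaussBinom_succ_succ q n j - gaussBinom_succ_succ q n (j + 1) + hpow

end GaussBinom

section qPochhammer

variable (q : ℝ)

@[simp]
lemma qP_zero (c : ℂ) : qP q c 0 = 1 := Finset.prod_range_zero _

lemma qP_succ (c : ℂ) (j : ℕ) : qP q c (j + 1) = qP q c j * (1 - c * (q : ℂ) ^ j) :=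
  Finset.prod_range_succ _ _

lemma qP_succ' (c : ℂ) (j : ℕ) : qP q c (j + 1) = (1 - c) * qP q (c * q) j := by
  rw [qP, Finset.prod_range_succ', pow_zero, mul_one, mul_comm, qP]
  congr 1
  refine Finset.prod_congr rfl fun i _ => ?_
  ring

lemma qP_add (c : ℂ) (m n : ℕ) : qP q c (m + n) = qP q c m * qP q (c * (q : ℂ) ^ m) n := by
  rw [qP, Finset.prod_range_add, qP, qP]
  congr 1
  refine Finset.prod_congr rfl fun i _ => ?_
  ring

lemma gaussBinom_mul_qP (d k : ℕ) :
    gaussBinom (q : ℂ) (k + d) k * qP q q k = qP q ((q : ℂ) ^ (d + 1)) k := by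
  induction d generalizing k with
  | zero => simp
  | succ d ihd =>
    induction k with
    | zero => simp
    | succ k ihk =>
      have hO := ihd (k + 1)
      rw [show k + 1 + (d + 1) = k + (d + 1) + 1 by ring, gaussBinom_succ_succ,
        show k + (d + 1) = k + 1 + d by ring]
      rw [show k + (d + 1) = k + 1 + d by ring] at ihk
      rw [qP_succ, qP_succ]
      rw [qP_succ q (q : ℂ), qP_succ' q ((q : ℂ) ^ (d + 1)), ← pow_succ] at hO
      linear_combination (1 - (q : ℂ) * (q : ℂ) ^ k) * ihk + (q : ℂ) ^ (k + 1) * hO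

/-- The inversion formula applied to `(q^{-(d+k)};q)_k` and to `(q^{1-d-k}/r;q)_k`, divided so
that the factors `q^{k(k-1)/2}` cancel. -/
lemma qP_mul_qP_inv_pow (hq : (q : ℂ) ≠ 0) {r : ℂ} (hr : r ≠ 0) (d k : ℕ) :
    qP q (r * (q : ℂ) ^ d) k * qP q ((q : ℂ) ^ (d + k))⁻¹ k * (q : ℂ) ^ k =
      qP q ((q : ℂ) ^ (d + 1)) k * r ^ k * qP q ((q : ℂ) * ((q : ℂ) ^ (d + k))⁻¹ / r) k := by
  induction k with
  | zero => simp
  | succ k ih =>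
    have hshift : ((q : ℂ) ^ (d + (k + 1)))⁻¹ * q = ((q : ℂ) ^ (d + k))⁻¹ := by
      rw [← add_assoc, pow_succ]; field_simp
    have key : (1 - r * (q : ℂ) ^ d * (q : ℂ) ^ k) * (1 - ((q : ℂ) ^ (d + (k + 1)))⁻¹) * q =
        (1 - (q : ℂ) ^ (d + 1) * (q : ℂ) ^ k) * r * (1 - q * ((q : ℂ) ^ (d + (k + 1)))⁻¹ / r) := by
      rw [← add_assoc]; field_simp; ring
    rw [qP_succ, qP_succ' q ((q : ℂ) ^ (d + (k + 1)))⁻¹, hshift, qP_succ,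
      qP_succ' q (q * ((q : ℂ) ^ (d + (k + 1)))⁻¹ / r), div_mul_eq_mul_div, mul_assoc (q : ℂ),
      hshift]
    linear_combination (1 - r * (q : ℂ) ^ d * (q : ℂ) ^ k) * (1 - ((q : ℂ) ^ (d + (k + 1)))⁻¹) *
      q * ih + qP q ((q : ℂ) ^ (d + 1)) k * r ^ k * qP q ((q : ℂ) * ((q : ℂ) ^ (d + k))⁻¹ / r) k * key

lemma qP_mul_qP_step {a σ : ℂ} (ha : a ≠ 0) (hσ : σ ≠ 0) (b : ℂ) {m k : ℕ} (hk : k ≤ m) :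
    (1 - b * σ * (q : ℂ) ^ m) * (1 - b / σ * (q : ℂ) ^ m) * (qP q (a * σ) k * qP q (a / σ) k) =
      (1 - b / a * (q : ℂ) ^ (m - k)) * (1 - a * b * (q : ℂ) ^ (m + k)) *
          (qP q (a * σ) k * qP q (a / σ) k) +
        b / a * (q : ℂ) ^ (m - k) * (qP q (a * σ) (k + 1) * qP q (a / σ) (k + 1)) := by
  obtain ⟨d, rfl⟩ := Nat.exists_eq_add_of_le hk
  rw [qP_succ, qP_succ, Nat.add_sub_cancel_left]
  field_simp
  ring

end qPochhammer

noncomputable def connCoeff (q : ℝ) (r s : ℂ) (m k : ℕ) : ℂ :=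
  gaussBinom (q : ℂ) m k * r ^ k * qP q r (m - k) * qP q (s * (q : ℂ) ^ k) (m - k)

section connCoeff

variable (q : ℝ) (r s : ℂ)

lemma connCoeff_succ_zero (m : ℕ) :
    connCoeff q r s (m + 1) 0 =
      connCoeff q r s m 0 * ((1 - r * (q : ℂ) ^ m) * (1 - s * (q : ℂ) ^ m)) := by
  simp only [connCoeff, gaussBinom_zero_right, Nat.sub_zero, qP_succ, pow_zero, mul_one]
  ring

lemma connCoeff_succ_succ {m k : ℕ} (hk : k ≤ m) :
    connCoeff q r s (m + 1) (k + 1) =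
      connCoeff q r s m (k + 1) *
          ((1 - r * (q : ℂ) ^ (m - (k + 1))) * (1 - s * (q : ℂ) ^ (m + (k + 1)))) +
        connCoeff q r s m k * (r * (q : ℂ) ^ (m - k)) := by
  obtain ⟨d, rfl⟩ := Nat.exists_eq_add_of_le hk
  rcases d with _ | e
  · simp only [connCoeff, add_zero, Nat.sub_self, Nat.sub_eq_zero_of_le k.le_succ, qP_zero,
      gaussBinom_self, gaussBinom_eq_zero_of_lt _ k.lt_succ_self, pow_zero]
    ring
  · have pascal := gaussBinom_succ_succ (q : ℂ) (k + (e + 1)) k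
    have pascal' := gaussBinom_succ_succ' (q : ℂ) (k + (e + 1)) k
    rw [show k + (e + 1) - k = e + 1 by omega] at pascal'
    simp only [connCoeff, show k + (e + 1) + 1 - (k + 1) = e + 1 by omega,
      show k + (e + 1) - (k + 1) = e by omega, Nat.add_sub_cancel_left]
    rw [qP_succ q r e, qP_succ q (s * (q : ℂ) ^ (k + 1)) e, qP_succ' q (s * (q : ℂ) ^ k) e,
      show s * (q : ℂ) ^ k * q = s * (q : ℂ) ^ (k + 1) by ring]
    linear_combination r ^ (k + 1) * qP q r e * (1 - r * (q : ℂ) ^ e) *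
      qP q (s * (q : ℂ) ^ (k + 1)) e * (pascal' - s * (q : ℂ) ^ (k + e + 1) * pascal)

end connCoeff

lemma sum_range_mul_add_mul_succ {R : Type*} [CommRing R] (C C' A B P : ℕ → R) (n : ℕ)
    (h0 : C' 0 = C 0 * A 0) (hsucc : ∀ k ≤ n, C' (k + 1) = C (k + 1) * A (k + 1) + C k * B k)
    (hn : C (n + 1) = 0) :
    ∑ k ∈ Finset.range (n + 1), C k * (A k * P k + B k * P (k + 1)) =
      ∑ k ∈ Finset.range (n + 2), C' k * P k := by
  have hshift : ∑ k ∈ Finset.range (n + 1), C k * A k * P k =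
      ∑ k ∈ Finset.range (n + 1), C (k + 1) * A (k + 1) * P (k + 1) + C 0 * A 0 * P 0 := by
    have h := Finset.sum_range_succ' (fun k => C k * A k * P k) (n + 1)
    rwa [Finset.sum_range_succ, hn, zero_mul, zero_mul, add_zero] at h
  have hC' : ∀ k ∈ Finset.range (n + 1), C' (k + 1) * P (k + 1) =
      C (k + 1) * A (k + 1) * P (k + 1) + C k * B k * P (k + 1) := by
    intro k hk
    rw [hsucc k (Nat.lt_succ_iff.mp (Finset.mem_range.mp hk))]
    ring
  rw [Finset.sum_range_succ' (fun k => C' k * P k), Finset.sum_congr rfl hC',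
    Finset.sum_add_distrib, h0]
  simp only [mul_add, Finset.sum_add_distrib, ← mul_assoc, hshift]
  ring

theorem qP_mul_qP_eq_sum_connCoeff (q : ℝ) {a σ : ℂ} (ha : a ≠ 0) (hσ : σ ≠ 0) (b : ℂ) (m : ℕ) :
    qP q (b * σ) m * qP q (b / σ) m =
      ∑ k ∈ Finset.range (m + 1),
        connCoeff q (b / a) (a * b) m k * (qP q (a * σ) k * qP q (a / σ) k) := by
  induction m with
  | zero => simp [connCoeff]
  | succ m ih =>
    rw [qP_succ, qP_succ, show ∀ x y u v : ℂ, x * u * (y * v) = u * v * (x * y) by intros; ring,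
      ih, Finset.mul_sum]
    rw [Finset.sum_congr rfl fun k hk => by
      rw [mul_left_comm, qP_mul_qP_step q ha hσ b (Nat.lt_succ_iff.mp (Finset.mem_range.mp hk))]]
    refine sum_range_mul_add_mul_succ _ _ _ _ _ m (connCoeff_succ_zero q _ _ m)
      (fun k hk => connCoeff_succ_succ q _ _ hk) ?_
    rw [connCoeff, gaussBinom_eq_zero_of_lt _ m.lt_succ_self]
    ring

lemma qP_self_ne_zero {q : ℝ} (hq0 : 0 < q) (hq1 : q < 1) (k : ℕ) : qP q q k ≠ 0 := by
  refine Finset.prod_ne_zero_iff.mpr fun i _ => ?_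
  rw [← pow_succ', ← Complex.ofReal_pow, ← Complex.ofReal_one, ← Complex.ofReal_sub,
    Complex.ofReal_ne_zero, sub_ne_zero]
  exact (pow_lt_one₀ hq0.le hq1 i.succ_ne_zero).ne'

lemma connCoeff_eq_div (q : ℝ) (hq : (q : ℂ) ≠ 0) {a b : ℂ} (ha : a ≠ 0) (hb : b ≠ 0) {m k : ℕ}
    (hk : k ≤ m) (h1 : qP q (a * b) k ≠ 0) (h2 : qP q ((q : ℂ) ^ (1 - (m : ℤ)) * a / b) k ≠ 0)
    (h3 : qP q q k ≠ 0) :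
    connCoeff q (b / a) (a * b) m k =
      qP q (a * b) m * qP q (b / a) m *
        ((qP q ((q : ℂ) ^ (-(m : ℤ))) k * (q : ℂ) ^ k) /
          (qP q (q : ℂ) k * qP q (a * b) k * qP q ((q : ℂ) ^ (1 - (m : ℤ)) * a / b) k)) := by
  obtain ⟨d, rfl⟩ := Nat.exists_eq_add_of_le hk
  have hneg : (q : ℂ) ^ (-((k + d : ℕ) : ℤ)) = ((q : ℂ) ^ (d + k))⁻¹ := by
    rw [zpow_neg, zpow_natCast, add_comm]
  have hone : (q : ℂ) ^ (1 - ((k + d : ℕ) : ℤ)) * a / b = q * ((q : ℂ) ^ (d + k))⁻¹ / (b / a) := by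
    rw [sub_eq_add_neg, zpow_add₀ hq, zpow_one, zpow_neg, zpow_natCast, add_comm k d]
    field_simp
  rw [hone] at h2
  have hsplit : qP q (b / a) (k + d) = qP q (b / a) d * qP q (b / a * (q : ℂ) ^ d) k := by
    rw [Nat.add_comm k d, qP_add]
  rw [hneg, hone, mul_div_assoc', eq_div_iff (mul_ne_zero (mul_ne_zero h3 h1) h2), connCoeff,
    Nat.add_sub_cancel_left, qP_add q (a * b) k d, hsplit]
  linear_combination (b / a) ^ k * qP q (b / a) d * qP q (a * b * (q : ℂ) ^ k) d * qP q (a * b) k *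
      qP q (q * ((q : ℂ) ^ (d + k))⁻¹ / (b / a)) k * gaussBinom_mul_qP q d k -
    qP q (a * b) k * qP q (a * b * (q : ℂ) ^ k) d * qP q (b / a) d *
      qP_mul_qP_inv_pow q hq (div_ne_zero hb ha) d k

/-- Connection coefficient formula (equivalent to the q-Saalschütz summation):
`(bσ;q)_m (b/σ;q)_m = (ab;q)_m (b/a;q)_m ∑_{k=0}^m
   (q^{-m};q)_k q^k / ((q;q)_k (ab;q)_k (q^{1-m}a/b;q)_k) · (aσ;q)_k (a/σ;q)_k`. -/
theorem connection_coefficient_qSaalschutz (q : ℝ) (hq0 : 0 < q) (hq1 : q < 1)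
    (a b σ : ℂ) (ha : a ≠ 0) (hb : b ≠ 0) (hσ : σ ≠ 0) (m : ℕ)
    (h1 : ∀ k ≤ m, qP q (a * b) k ≠ 0)
    (h2 : ∀ k ≤ m, qP q ((q : ℂ) ^ (1 - (m : ℤ)) * a / b) k ≠ 0) :
    qP q (b * σ) m * qP q (b / σ) m =
      qP q (a * b) m * qP q (b / a) m *
        ∑ k ∈ Finset.range (m + 1),
          (qP q ((q : ℂ) ^ (-(m : ℤ))) k * (q : ℂ) ^ k) /
              (qP q (q : ℂ) k * qP q (a * b) k *
                qP q ((q : ℂ) ^ (1 - (m : ℤ)) * a / b) k) *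
            (qP q (a * σ) k * qP q (a / σ) k) := by
  have hq : (q : ℂ) ≠ 0 := Complex.ofReal_ne_zero.mpr hq0.ne'
  rw [qP_mul_qP_eq_sum_connCoeff q ha hσ b m, Finset.mul_sum]
  refine Finset.sum_congr rfl fun k hk => ?_
  have hkm : k ≤ m := Nat.lt_succ_iff.mp (Finset.mem_range.mp hk)
  rw [connCoeff_eq_div q hq ha hb hkm (h1 k hkm) (h2 k hkm) (qP_self_ne_zero hq0 hq1 k), mul_assoc]
end

section
/- (Darboux factorisation.) Let $0<q<1$ and $a,b \in \mathbb{C}\setminus\{0\}$. Define $L^{(a,b)} f(x) = a^2(1+1/x)(f(qx)-f(x)) + (1+aq/(bx))(f(x/q)-f(x))$, $B_q f(x) = (f(x)-f(x/q))/x$, and $A(a,b)f(x) = (1+bx/(qa))f(x) - ab(1+x)f(qx)$. Then for all functions $f$ on $\{yq^k : k \in \mathbb{Z}\}$ (any fixed $y>0$) and all $x$ in this set: $-b\, (L^{(a,b)} f)(x) = aq\, (A(a,b)(B_q f))(x)$. -/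
/-- Second order hypergeometric q-difference operator `L^{(a,b)}`. -/
noncomputable def Lop (q : ℝ) (a b : ℂ) (f : ℂ → ℂ) (x : ℂ) : ℂ :=
  a ^ 2 * (1 + 1 / x) * (f ((q : ℂ) * x) - f x) +
    (1 + a * (q : ℂ) / (b * x)) * (f (x / (q : ℂ)) - f x)

/-- Backward q-derivative `B_q f(x) = (f(x) - f(x/q))/x`. -/
noncomputable def Bop (q : ℝ) (f : ℂ → ℂ) (x : ℂ) : ℂ :=
  (f x - f (x / (q : ℂ))) / x

/-- The operator `A(a,b)f(x) = (1 + bx/(qa)) f(x) - ab(1+x) f(qx)`. -/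
noncomputable def Aop (q : ℝ) (a b : ℂ) (f : ℂ → ℂ) (x : ℂ) : ℂ :=
  (1 + b * x / ((q : ℂ) * a)) * f x - a * b * (1 + x) * f ((q : ℂ) * x)

/-- Darboux factorisation: `-b L^{(a,b)} = aq A(a,b) ∘ B_q` on any q-grid `y qᶻ`. -/
theorem darboux_factorisation (q : ℝ) (hq0 : 0 < q) (hq1 : q < 1)
    (a b : ℂ) (ha : a ≠ 0) (hb : b ≠ 0)
    (y : ℝ) (hy : 0 < y) (f : ℂ → ℂ) (k : ℤ) :
    -b * Lop q a b f ((y : ℂ) * (q : ℂ) ^ k) =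
      a * (q : ℂ) * Aop q a b (Bop q f) ((y : ℂ) * (q : ℂ) ^ k) := by
  have hq : (q : ℂ) ≠ 0 := by exact_mod_cast hq0.ne'
  set x : ℂ := (y : ℂ) * (q : ℂ) ^ k with hxdef
  have hx : x ≠ 0 := by
    apply mul_ne_zero
    · exact_mod_cast hy.ne'
    · exact zpow_ne_zero _ hq
  have hqx : (q : ℂ) * x ≠ 0 := mul_ne_zero hq hx
  have hcancel : (q : ℂ) * x / (q : ℂ) = x := by
    field_simp
  unfold Lop Aop Bop
  rw [hcancel]
  field_simp
  ring
end

section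
/- (Conjugation identity for the $q$-difference operator.) Let $0<q<1$, $a,b \in \mathbb{C}\setminus\{0\}$. Define $\mathcal{L}^{(a,b)} f(x) = \frac{a}{2}(1+\frac{1}{x}) f(qx) - (\frac{a}{2x}+\frac{q}{2bx}) f(x) + \frac{1}{2a}(1+\frac{aq}{bx}) f(x/q)$, and the operator $(S(a,b) f)(x) = \frac{(-x;q)_\infty}{(-bx/a;q)_\infty}\, f(bx/a)$. Then $S(a,b)^{-1} \circ \mathcal{L}^{(a,b)} \circ S(a,b) = \mathcal{L}^{(b,a)}$ as operators on functions on a $q$-grid $yq^{\mathbb{Z}}$, $y>0$, provided $(-bx/a;q)_\infty \neq 0$ on the grid. -/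
/-- Infinite q-shifted factorial `(c;q)_∞`. -/
noncomputable def qPinf (q : ℝ) (c : ℂ) : ℂ := ∏' i : ℕ, (1 - c * (q : ℂ) ^ i)

/-- The q-difference operator `𝓛^{(a,b)}`. -/
noncomputable def Lcal (q : ℝ) (a b : ℂ) (f : ℂ → ℂ) (x : ℂ) : ℂ :=
  a / 2 * (1 + 1 / x) * f ((q : ℂ) * x) -
    (a / (2 * x) + (q : ℂ) / (2 * b * x)) * f x +
    1 / (2 * a) * (1 + a * (q : ℂ) / (b * x)) * f (x / (q : ℂ))

/-- The operator `S(a,b) f(x) = ((-x;q)_∞ / (-bx/a;q)_∞) f(bx/a)`. -/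
noncomputable def Sop (q : ℝ) (a b : ℂ) (f : ℂ → ℂ) (x : ℂ) : ℂ :=
  qPinf q (-x) / qPinf q (-(b * x / a)) * f (b * x / a)

/-!
Since `(-x;q)_∞ = (1 + x) (-qx;q)_∞`, every product that occurs in `S(b,a) 𝓛^{(a,b)} S(a,b) f (x)`
is a rational function of `x` times `(-qx;q)_∞` or `(-qax/b;q)_∞`. These two cancel, and what
remains is a rational identity between the coefficients of `𝓛^{(a,b)}` and `𝓛^{(b,a)}`.
-/

lemma multipliable_one_sub_mul_pow {q : ℂ} (hq : ‖q‖ < 1) (c : ℂ) :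
    Multipliable fun i : ℕ => 1 - c * q ^ i := by
  simpa only [sub_eq_add_neg] using multipliable_one_add_of_summable (f := fun i => -(c * q ^ i))
    (by simpa [norm_mul, norm_pow] using
      (summable_geometric_of_lt_one (norm_nonneg _) hq).mul_left ‖c‖)

lemma qPinf_eq_one_sub_mul {q : ℝ} (hq : |q| < 1) (c : ℂ) :
    qPinf q c = (1 - c) * qPinf q (c * q) := by
  have hq' : ‖(q : ℂ)‖ < 1 := by rwa [Complex.norm_real, Real.norm_eq_abs]
  have hshift : (fun i : ℕ => 1 - c * (q : ℂ) ^ (i + 1)) = fun i => 1 - c * q * (q : ℂ) ^ i := by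
    ext i; ring
  rw [qPinf, tprod_eq_zero_mul' (hshift ▸ multipliable_one_sub_mul_pow hq' (c * q)), hshift,
    pow_zero, mul_one, qPinf]

lemma qPinf_neg {q : ℝ} (hq : |q| < 1) (w : ℂ) :
    qPinf q (-w) = (1 + w) * qPinf q (-(q * w)) := by
  rw [qPinf_eq_one_sub_mul hq, sub_neg_eq_add, neg_mul, mul_comm w]

lemma qPinf_neg_div {q : ℝ} (hq : |q| < 1) (hq0 : q ≠ 0) (w : ℂ) :
    qPinf q (-(w / q)) = (1 + w / q) * qPinf q (-w) := by
  rw [qPinf_neg hq, mul_div_cancel₀ w (by exact_mod_cast hq0)]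

theorem Sop_Lcal_Sop_eq_Lcal {q : ℝ} (hq : |q| < 1) (hq0 : q ≠ 0) {a b : ℂ} (ha : a ≠ 0)
    (hb : b ≠ 0) (f : ℂ → ℂ) {x : ℂ} (hx : x ≠ 0) (hPxq : qPinf q (-(x / q)) ≠ 0)
    (hPu : qPinf q (-(a * x / b)) ≠ 0) :
    Sop q b a (fun t => Lcal q a b (Sop q a b f) t) x = Lcal q b a f x := by
  have hq' : (q : ℂ) ≠ 0 := by exact_mod_cast hq0
  rw [Sop, Lcal]
  simp only [Sop]
  rw [show b * (a * x / b) / a = x by field_simp, show b * (q * (a * x / b)) / a = q * x by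
    field_simp, show b * (a * x / b / q) / a = x / q by field_simp]
  rw [qPinf_neg_div hq hq0 x, qPinf_neg hq x] at hPxq ⊢
  rw [qPinf_neg_div hq hq0 (a * x / b), qPinf_neg hq (a * x / b)]
  rw [qPinf_neg hq (a * x / b)] at hPu
  generalize qPinf q (-(q * x)) = A, qPinf q (-(q * (a * x / b))) = B at *
  rw [one_add_div hq'] at hPxq
  rw [one_add_div hb, mul_comm a x] at hPu
  obtain ⟨⟨hqx, -⟩, h1x, hA⟩ := by simpa only [mul_ne_zero_iff, div_ne_zero_iff] using hPxq
  obtain ⟨⟨hbx, -⟩, hB⟩ := by simpa only [mul_ne_zero_iff, div_ne_zero_iff] using hPu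
  rw [Lcal]
  field_simp
  ring

/-- Conjugation identity `S(a,b)⁻¹ ∘ 𝓛^{(a,b)} ∘ S(a,b) = 𝓛^{(b,a)}` on a q-grid
`y qᶻ`, with `S(a,b)⁻¹ = S(b,a)`, provided the relevant `(·;q)_∞` products do not
vanish on the grids. -/
theorem Lcal_conjugation (q : ℝ) (hq0 : 0 < q) (hq1 : q < 1)
    (a b : ℂ) (ha : a ≠ 0) (hb : b ≠ 0)
    (y : ℝ) (hy : 0 < y)
    (h1 : ∀ j : ℤ, qPinf q (-((y : ℂ) * (q : ℂ) ^ j)) ≠ 0)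
    (h2 : ∀ j : ℤ, qPinf q (-(a * ((y : ℂ) * (q : ℂ) ^ j) / b)) ≠ 0)
    (f : ℂ → ℂ) (k : ℤ) :
    Sop q b a (fun t => Lcal q a b (Sop q a b f) t) ((y : ℂ) * (q : ℂ) ^ k) =
      Lcal q b a f ((y : ℂ) * (q : ℂ) ^ k) := by
  have hq : |q| < 1 := abs_lt.2 ⟨by linarith, hq1⟩
  have hq' : (q : ℂ) ≠ 0 := by exact_mod_cast hq0.ne'
  refine Sop_Lcal_Sop_eq_Lcal hq hq0.ne' ha hb f
    (mul_ne_zero (by exact_mod_cast hy.ne') (zpow_ne_zero _ hq')) ?_ (h2 k)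
  simpa only [zpow_sub_one₀ hq', ← div_eq_mul_inv, mul_div_assoc] using h1 (k - 1)
end
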